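/- Let n = 3 and let v ∈ S² with L = span{v}. Suppose real constants β_i, 0 ≤ i ≤ ⌊(p−1)/2⌋ − b (for some fixed b with 0 ≤ b ≤ ⌊(p−1)/2⌋), satisfy Σ_i β_i Q_{L^⊥}^i u^{p−2b−1−2i} = 0 as symmetric tensors for all u in the unit circle of L^⊥. Then all β_i = 0. -/

import Mathlib

open scoped RealInnerProductSpace
open Finset

/-- The orthogonal projection onto a subspace, as a map into the ambient space. -/
noncomputable def projVec {n : ℕ} (L : Submodule ℝ (EuclideanSpace ℝ (Fin n)))
    (y : EuclideanSpace ℝ (Fin n)) : EuclideanSpace ℝ (Fin n) :=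
  (Submodule.orthogonalProjection L y : EuclideanSpace ℝ (Fin n))

/-!
Choose an orthonormal pair `u, w` in `L^⊥` and test the identity at `x = u + t w`. Then
`π_{L^⊥} x = x`, `‖x‖² = 1 + t²` and `⟪u, x⟫ = 1`, so the identity says that the polynomial
`Σ_i β_i Y^i` vanishes at every `Y = 1 + t² ≥ 1`. Having infinitely many roots, it is zero.
-/

open Polynomial in
theorem Finset.eq_zero_of_sum_mul_pow_eq_zero {R : Type*} [CommRing R] [IsDomain R]
    {s : Finset ℕ} {S : Set R} (hS : S.Infinite) {β : ℕ → R}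
    (h : ∀ y ∈ S, ∑ i ∈ s, β i * y ^ i = 0) : ∀ i ∈ s, β i = 0 := by
  set P : R[X] := ∑ i ∈ s, C (β i) * X ^ i
  have hP : P = 0 :=
    eq_zero_of_infinite_isRoot P <| hS.mono fun y hy => by simpa [P, eval_finsetSum] using h y hy
  intro i hi
  have hcoeff : P.coeff i = β i := by simp [P, hi]
  rw [← hcoeff, hP, coeff_zero]

theorem Submodule.exists_orthonormal_pair {E : Type*} [NormedAddCommGroup E]
    [InnerProductSpace ℝ E] (K : Submodule ℝ E) [FiniteDimensional ℝ K]
    (hK : 2 ≤ Module.finrank ℝ K) :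
    ∃ u ∈ K, ∃ w ∈ K, ‖u‖ = 1 ∧ ‖w‖ = 1 ∧ ⟪u, w⟫ = 0 := by
  have hB := (stdOrthonormalBasis ℝ K).orthonormal
  let i₀ : Fin (Module.finrank ℝ K) := ⟨0, by omega⟩
  let i₁ : Fin (Module.finrank ℝ K) := ⟨1, by omega⟩
  exact ⟨_, (stdOrthonormalBasis ℝ K i₀).2, _, (stdOrthonormalBasis ℝ K i₁).2,
    hB.1 i₀, hB.1 i₁, hB.2 (by simp [i₀, i₁])⟩

theorem finrank_sub_one_le_finrank_orthogonal_span_singleton {E : Type*} [NormedAddCommGroup E]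
    [InnerProductSpace ℝ E] [FiniteDimensional ℝ E] (v : E) :
    Module.finrank ℝ E - 1 ≤ Module.finrank ℝ (ℝ ∙ v)ᗮ := by
  have hv : Module.finrank ℝ (ℝ ∙ v) ≤ 1 := by
    simpa using finrank_span_le_card (R := ℝ) ({v} : Set E)
  have := (ℝ ∙ v).finrank_add_finrank_orthogonal
  omega

theorem projVec_eq_self {n : ℕ} {L : Submodule ℝ (EuclideanSpace ℝ (Fin n))}
    {y : EuclideanSpace ℝ (Fin n)} (hy : y ∈ L) : projVec L y = y :=
  L.starProjection_eq_self_iff.mpr hy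

section OrthonormalPair

variable {E : Type*} [NormedAddCommGroup E] [InnerProductSpace ℝ E] {u w : E}

theorem norm_add_smul_sq_of_orthonormal (hu : ‖u‖ = 1) (hw : ‖w‖ = 1) (huw : ⟪u, w⟫ = 0)
    (t : ℝ) : ‖u + t • w‖ ^ 2 = 1 + t ^ 2 := by
  rw [norm_add_sq_real, norm_smul, real_inner_smul_right, huw, hu, hw, Real.norm_eq_abs,
    mul_one, sq_abs]
  ring

theorem inner_add_smul_of_orthonormal (hu : ‖u‖ = 1) (huw : ⟪u, w⟫ = 0) (t : ℝ) :
    ⟪u, u + t • w⟫ = 1 := by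
  rw [inner_add_right, real_inner_smul_right, huw, real_inner_self_eq_norm_sq, hu]
  ring

end OrthonormalPair

theorem stmt_18_general (p b : ℕ)
    (v : EuclideanSpace ℝ (Fin 3)) (β : ℕ → ℝ)
    (h : ∀ u : EuclideanSpace ℝ (Fin 3), ‖u‖ = 1 → u ∈ (Submodule.span ℝ {v})ᗮ →
      ∀ x : EuclideanSpace ℝ (Fin 3),
        ∑ i ∈ Finset.range ((p - 1) / 2 - b + 1),
          β i * ‖projVec (Submodule.span ℝ {v})ᗮ x‖ ^ (2 * i) *
            ⟪u, x⟫ ^ (p - 2 * b - 1 - 2 * i) = 0) :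
    ∀ i ≤ (p - 1) / 2 - b, β i = 0 := by
  set K := (Submodule.span ℝ {v})ᗮ
  have hK : 2 ≤ Module.finrank ℝ K := by
    simpa using finrank_sub_one_le_finrank_orthogonal_span_singleton v
  obtain ⟨u, huK, w, hwK, hu, hw, huw⟩ := K.exists_orthonormal_pair hK
  have hpoly : ∀ y ∈ Set.Ici (1 : ℝ), ∑ i ∈ range ((p - 1) / 2 - b + 1), β i * y ^ i = 0 := by
    rintro y (hy : 1 ≤ y)
    obtain ⟨t, rfl⟩ : ∃ t : ℝ, 1 + t ^ 2 = y :=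
      ⟨√(y - 1), by rw [Real.sq_sqrt (by linarith)]; ring⟩
    have hx := h u hu huK (u + t • w)
    simpa only [projVec_eq_self (K.add_mem huK (K.smul_mem t hwK)), pow_mul,
      norm_add_smul_sq_of_orthonormal hu hw huw, inner_add_smul_of_orthonormal hu huw, one_pow,
      mul_one] using hx
  intro i hi
  exact eq_zero_of_sum_mul_pow_eq_zero (Set.Ici_infinite 1) hpoly i (mem_range.2 (by omega))

/-- In ℝ³, with `L = span{v}`, if `Σ_i β_i Q_{L^⊥}^i u^{p−2b−1−2i} = 0` as symmetric
tensors (expressed as polynomials in `x`; `Q_{L^⊥}` evaluates to `‖π_{L^⊥}x‖²`) for every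
unit vector `u ∈ L^⊥`, then all `β_i = 0`. -/
theorem stmt_18 (p b : ℕ) (hp : 1 ≤ p) (hb : b ≤ (p - 1) / 2)
    (v : EuclideanSpace ℝ (Fin 3)) (hv : ‖v‖ = 1) (β : ℕ → ℝ)
    (h : ∀ u : EuclideanSpace ℝ (Fin 3), ‖u‖ = 1 → u ∈ (Submodule.span ℝ {v})ᗮ →
      ∀ x : EuclideanSpace ℝ (Fin 3),
        ∑ i ∈ Finset.range ((p - 1) / 2 - b + 1),
          β i * ‖projVec (Submodule.span ℝ {v})ᗮ x‖ ^ (2 * i) *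
            ⟪u, x⟫ ^ (p - 2 * b - 1 - 2 * i) = 0) :
    ∀ i ≤ (p - 1) / 2 - b, β i = 0 :=
  stmt_18_general p b v β h
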